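/- Let Δ be a pure shellable simplicial complex with shelling F_1,...,F_m, and suppose that for each i ≥ 2 the complex ⟨F_1,...,F_{i−1}⟩ ∩ ⟨F_i⟩ is generated by {F_i \ {v} : v ∈ R_i} for a set R_i ⊆ F_i. Then for any field K, the h-polynomial h(t) of K[Δ] satisfies Σ_{i=1}^m t^{|R_i|} = h(t), where R_1 = ∅; in particular h(1) = m, the number of facets of Δ. -/

import Mathlib

/-!
The monomials outside the Stanley–Reisner ideal, i.e. those whose support is a face, form a
`K`-basis of `K[Δ]`, so the Hilbert function counts them. The shelling partitions the faces into
the intervals `[R i, F i]`: a face belongs to the interval of the first facet containing it, and to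
no later one because the restriction `R j` is missing from every face shared with an earlier
facet. The monomials with support in `[R, F]` have generating series `t^|R| / (1 - t)^|F|`, so
multiplying by `(1 - t)^d` leaves `∑ i, t^|R i|`.
-/

open MvPolynomial

/-- The Stanley–Reisner ideal of a collection `Δ` of subsets of `Fin n`. -/
noncomputable def srIdeal (K : Type) [Field K] (n : ℕ) (Δ : Set (Finset (Fin n))) :
    Ideal (MvPolynomial (Fin n) K) :=
  Ideal.span {p | ∃ F : Finset (Fin n), F ∉ Δ ∧ p = ∏ i ∈ F, X i}

/-- Dimension of the degree-`k` graded component of `S/I`, `S = K[x_1,…,x_n]`. -/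
noncomputable def hilbFn (K : Type) [Field K] (n : ℕ) (I : Ideal (MvPolynomial (Fin n) K))
    (k : ℕ) : ℕ :=
  Module.finrank K
    ((homogeneousSubmodule (Fin n) K k) ⧸
      (Submodule.comap (homogeneousSubmodule (Fin n) K k).subtype (Submodule.restrictScalars K I)))

/-- The Hilbert–Poincaré series of `S/I`, as an integer power series. -/
noncomputable def hilbSeries (K : Type) [Field K] (n : ℕ) (I : Ideal (MvPolynomial (Fin n) K)) :
    PowerSeries ℤ :=
  PowerSeries.mk fun k => (hilbFn K n I k : ℤ)

open Finset

section SquarefreeExponent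

variable {σ : Type*}

noncomputable def squarefreeExp (S : Finset σ) : σ →₀ ℕ := ∑ i ∈ S, Finsupp.single i 1

theorem squarefreeExp_apply [DecidableEq σ] (S : Finset σ) (i : σ) :
    squarefreeExp S i = if i ∈ S then 1 else 0 := by
  simp [squarefreeExp, Finsupp.finsetSum_apply, Finsupp.single_apply]

@[simp]
theorem support_squarefreeExp (S : Finset σ) : (squarefreeExp S).support = S := by
  classical
  ext i
  simp [squarefreeExp_apply]

@[simp]
theorem degree_squarefreeExp (S : Finset σ) : (squarefreeExp S).degree = #S := by
  simp [squarefreeExp]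

theorem squarefreeExp_le_iff {S : Finset σ} {μ : σ →₀ ℕ} :
    squarefreeExp S ≤ μ ↔ S ⊆ μ.support := by
  classical
  refine ⟨fun h => (support_squarefreeExp S).symm.subset.trans (Finsupp.support_mono h),
    fun h i => ?_⟩
  rw [squarefreeExp_apply]
  split_ifs with hi
  · exact Nat.one_le_iff_ne_zero.mpr (Finsupp.mem_support_iff.mp (h hi))
  · exact Nat.zero_le _

theorem prod_X_eq_monomial_squarefreeExp {R : Type*} [CommSemiring R] (S : Finset σ) :
    (∏ i ∈ S, X i : MvPolynomial σ R) = monomial (squarefreeExp S) 1 := by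
  simp [squarefreeExp, monomial_sum_one, X]

end SquarefreeExponent

theorem mem_srIdeal_iff {K : Type} [Field K] {n : ℕ} {Δ : Set (Finset (Fin n))}
    (hΔ : IsLowerSet Δ) {p : MvPolynomial (Fin n) K} :
    p ∈ srIdeal K n Δ ↔ ∀ μ ∈ p.support, μ.support ∉ Δ := by
  have hspan : srIdeal K n Δ =
      Ideal.span ((fun μ => monomial μ (1 : K)) '' (squarefreeExp '' Δᶜ)) := by
    rw [srIdeal, Set.image_image]
    congr 1
    ext p
    simp [prod_X_eq_monomial_squarefreeExp, eq_comm]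
  rw [hspan, mem_ideal_span_monomial_image]
  refine forall₂_congr fun μ _ =>
    ⟨?_, fun h => ⟨_, ⟨μ.support, h, rfl⟩, squarefreeExp_le_iff.mpr subset_rfl⟩⟩
  rintro ⟨_, ⟨G, hG, rfl⟩, hle⟩ hμ
  exact hG (hΔ (squarefreeExp_le_iff.mp hle) hμ)

theorem hilbFn_eq_card {K : Type} [Field K] {n : ℕ} {I : Ideal (MvPolynomial (Fin n) K)}
    {A : Set (Fin n →₀ ℕ)} (hI : ∀ p, p ∈ I ↔ ∀ μ ∈ p.support, μ ∉ A) {k : ℕ}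
    {B : Finset (Fin n →₀ ℕ)} (hB : ∀ μ, μ ∈ B ↔ μ.degree = k ∧ μ ∈ A) :
    hilbFn K n I k = #B := by
  classical
  let coeffs : homogeneousSubmodule (Fin n) K k →ₗ[K] (B → K) :=
    LinearMap.pi fun μ => (lcoeff K μ.1).comp (Submodule.subtype _)
  have hker : LinearMap.ker coeffs = Submodule.comap (homogeneousSubmodule (Fin n) K k).subtype
      (Submodule.restrictScalars K I) := by
    ext ⟨p, hp⟩
    simp only [LinearMap.mem_ker, Submodule.mem_comap, Submodule.coe_subtype,
      Submodule.restrictScalars_mem, hI, funext_iff]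
    refine ⟨fun h μ hμ hμA => ?_, fun h μ => ?_⟩
    · have hdeg : μ.degree = k := by
        rw [Finsupp.degree_eq_weight_one]
        exact hp (mem_support_iff.mp hμ)
      exact mem_support_iff.mp hμ (h ⟨μ, (hB μ).mpr ⟨hdeg, hμA⟩⟩)
    · by_contra hμ
      exact h μ (mem_support_iff.mpr hμ) ((hB μ).mp μ.2).2
  have hsurj : Function.Surjective coeffs := by
    intro f
    refine ⟨⟨∑ μ : B, monomial μ.1 (f μ), ?_⟩, ?_⟩
    · exact IsHomogeneous.sum _ _ _ fun μ _ =>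
        isHomogeneous_monomial _ ((hB μ).mp μ.2).1
    · funext μ
      simp only [coeffs, LinearMap.pi_apply, LinearMap.comp_apply, Submodule.coe_subtype,
        lcoeff_apply, coeff_sum, coeff_monomial]
      rw [Finset.sum_eq_single μ (fun ν _ hν => if_neg fun h => hν (Subtype.ext h)) (by simp),
        if_pos rfl]
  rw [hilbFn, ((Submodule.quotEquivOfEq _ _ hker.symm).trans
    (coeffs.quotKerEquivOfSurjective hsurj)).finrank_eq, Module.finrank_fintype_fun_eq_card,
    Fintype.card_coe]

section MonomialsBetween

variable {σ : Type*} [DecidableEq σ]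

def monomialsBetween (R S : Finset σ) (k : ℕ) : Finset (σ →₀ ℕ) :=
  {μ ∈ S.finsuppAntidiag k | R ⊆ μ.support}

theorem mem_monomialsBetween {R S : Finset σ} {k : ℕ} {μ : σ →₀ ℕ} :
    μ ∈ monomialsBetween R S k ↔ μ.degree = k ∧ R ⊆ μ.support ∧ μ.support ⊆ S := by
  rw [monomialsBetween, mem_filter, mem_finsuppAntidiag', and_right_comm, and_assoc]
  rfl

theorem monomialsBetween_eq_empty {R S : Finset σ} {k : ℕ} (hk : k < #R) :
    monomialsBetween R S k = ∅ := by
  refine eq_empty_of_forall_notMem fun μ hμ => ?_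
  obtain ⟨hdeg, hR, -⟩ := mem_monomialsBetween.mp hμ
  have := Finsupp.degree_mono (squarefreeExp_le_iff.mpr hR)
  rw [degree_squarefreeExp, hdeg] at this
  omega

theorem monomialsBetween_add_card {R S : Finset σ} (hRS : R ⊆ S) (k : ℕ) :
    monomialsBetween R S (k + #R) =
      (S.finsuppAntidiag k).map (addRightEmbedding (squarefreeExp R)) := by
  ext μ
  simp only [mem_monomialsBetween, mem_map, mem_finsuppAntidiag', addRightEmbedding_apply]
  constructor
  · rintro ⟨hdeg, hR, hS⟩
    have hsum : μ - squarefreeExp R + squarefreeExp R = μ :=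
      tsub_add_cancel_of_le (squarefreeExp_le_iff.mpr hR)
    refine ⟨μ - squarefreeExp R, ⟨?_, Finsupp.support_tsub.trans hS⟩, hsum⟩
    have := congrArg Finsupp.degree hsum
    rw [map_add, degree_squarefreeExp, hdeg] at this
    exact Nat.add_right_cancel this
  · rintro ⟨ν, ⟨hdeg, hS⟩, rfl⟩
    rw [Finsupp.support_add_eq_union, support_squarefreeExp, map_add, degree_squarefreeExp]
    exact ⟨congrArg (· + #R) hdeg, subset_union_right, union_subset hS hRS⟩

theorem card_monomialsBetween {R S : Finset σ} (hRS : R ⊆ S) (k : ℕ) :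
    #(monomialsBetween R S k) = if #R ≤ k then (#S).multichoose (k - #R) else 0 := by
  split_ifs with hk
  · rw [← Nat.sub_add_cancel hk, monomialsBetween_add_card hRS, card_map,
      card_finsuppAntidiag_nat_eq_multichoose, Nat.add_sub_cancel]
  · rw [monomialsBetween_eq_empty (not_le.mp hk), card_empty]

end MonomialsBetween

theorem mk_multichoose_mul_one_sub_pow (A : Type*) [CommRing A] (d : ℕ) :
    (PowerSeries.mk fun k => (d.multichoose k : A)) * (1 - PowerSeries.X) ^ d = 1 := by
  cases d with
  | zero =>
    rw [pow_zero, mul_one]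
    ext (_ | k) <;> simp [Nat.multichoose_zero_succ, PowerSeries.coeff_one]
  | succ d =>
    convert PowerSeries.mk_add_choose_mul_one_sub_pow_eq_one A (d := d) using 4 with k
    rw [Nat.multichoose_eq, Nat.add_right_comm, Nat.add_sub_cancel, Nat.choose_symm_add]

theorem mk_card_monomialsBetween_mul_one_sub_pow {σ : Type*} [DecidableEq σ] {R S : Finset σ}
    (hRS : R ⊆ S) :
    (PowerSeries.mk fun k => (#(monomialsBetween R S k) : ℤ)) * (1 - PowerSeries.X) ^ #S =
      PowerSeries.X ^ #R := by
  have hshift : (PowerSeries.mk fun k => (#(monomialsBetween R S k) : ℤ)) =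
      PowerSeries.X ^ #R * PowerSeries.mk fun k => ((#S).multichoose k : ℤ) := by
    ext k
    rw [PowerSeries.coeff_mk, PowerSeries.coeff_X_pow_mul', card_monomialsBetween hRS,
      PowerSeries.coeff_mk]
    split_ifs <;> rfl
  rw [hshift, mul_assoc, mk_multichoose_mul_one_sub_pow, mul_one]

theorem hilbSeries_srIdeal_mul_one_sub_pow_of_partition {K : Type} [Field K] {n d : ℕ}
    {Δ : Set (Finset (Fin n))} (hΔ : IsLowerSet Δ) {ι : Type*} (s : Finset ι)
    (R F : ι → Finset (Fin n)) (hRF : ∀ i ∈ s, R i ⊆ F i) (hcard : ∀ i ∈ s, #(F i) = d)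
    (hcover : Δ = ⋃ i ∈ s, Set.Icc (R i) (F i))
    (hdisj : (s : Set ι).PairwiseDisjoint fun i => Set.Icc (R i) (F i)) :
    hilbSeries K n (srIdeal K n Δ) * (1 - PowerSeries.X) ^ d =
      ∑ i ∈ s, PowerSeries.X ^ #(R i) := by
  classical
  have hseries : hilbSeries K n (srIdeal K n Δ) =
      ∑ i ∈ s, PowerSeries.mk fun k => (#(monomialsBetween (R i) (F i) k) : ℤ) := by
    ext k
    have hdisj' : (s : Set ι).PairwiseDisjoint fun i => monomialsBetween (R i) (F i) k :=
      fun i hi j hj hij => Finset.disjoint_left.mpr fun μ hμi hμj => by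
        obtain ⟨-, hRi, hFi⟩ := mem_monomialsBetween.mp hμi
        obtain ⟨-, hRj, hFj⟩ := mem_monomialsBetween.mp hμj
        exact Set.disjoint_left.mp (hdisj hi hj hij) ⟨hRi, hFi⟩ ⟨hRj, hFj⟩
    have hmem (μ : Fin n →₀ ℕ) : μ ∈ s.biUnion (fun i => monomialsBetween (R i) (F i) k) ↔
        μ.degree = k ∧ μ.support ∈ Δ := by
      simp only [mem_biUnion, mem_monomialsBetween, hcover, Set.mem_iUnion, Set.mem_Icc,
        exists_prop, and_left_comm (b := μ.degree = k), exists_and_left]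
    rw [hilbSeries, PowerSeries.coeff_mk, map_sum,
      hilbFn_eq_card (A := {μ | μ.support ∈ Δ}) (fun p => mem_srIdeal_iff hΔ) hmem,
      card_biUnion hdisj']
    simp
  rw [hseries, sum_mul]
  refine sum_congr rfl fun i hi => ?_
  rw [← hcard i hi, mk_card_monomialsBetween_mul_one_sub_pow (hRF i hi)]

section Shelling

variable {σ : Type*} {F R : ℕ → Finset σ} {m : ℕ}

theorem exists_lt_subset_of_mem [Finite σ] {Δ : Set (Finset σ)}
    (hfacets : ∀ G : Finset σ, (G ∈ Δ ∧ ∀ G' ∈ Δ, G ⊆ G' → G = G') ↔ ∃ i < m, G = F i)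
    {G : Finset σ} (hG : G ∈ Δ) : ∃ i < m, G ⊆ F i := by
  obtain ⟨G', hGG', hmax⟩ := Finite.exists_le_maximal (p := (· ∈ Δ)) hG
  obtain ⟨i, hi, rfl⟩ := (hfacets G').mp ⟨hmax.prop, fun _ h hsub => hmax.eq_of_le h hsub⟩
  exact ⟨i, hi, hGG'⟩

theorem pairwiseDisjoint_Icc_of_shelling [DecidableEq σ]
    (hshell : ∀ i, 0 < i → i < m →
      ∀ S : Finset σ, ((S ⊆ F i ∧ ∃ j < i, S ⊆ F j) ↔ ∃ v ∈ R i, S ⊆ F i \ {v})) :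
    (range m : Set ℕ).PairwiseDisjoint fun i => Set.Icc (R i) (F i) := by
  have key : ∀ i j, i < j → j < m → Disjoint (Set.Icc (R i) (F i)) (Set.Icc (R j) (F j)) := by
    refine fun i j hij hj => Set.disjoint_left.mpr fun G ⟨_, hGi⟩ ⟨hRj, hGj⟩ => ?_
    obtain ⟨v, hv, hGv⟩ := (hshell j (by omega) hj G).mp ⟨hGj, i, hij, hGi⟩
    exact (mem_sdiff.mp (hGv (hRj hv))).2 (mem_singleton_self v)
  intro i hi j hj hij
  rcases hij.lt_or_gt with h | h
  · exact key i j h (mem_range.mp hj)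
  · exact (key j i h (mem_range.mp hi)).symm

theorem eq_biUnion_Icc_of_shelling [Finite σ] [DecidableEq σ] {Δ : Set (Finset σ)}
    (hΔ : IsLowerSet Δ)
    (hfacets : ∀ G : Finset σ, (G ∈ Δ ∧ ∀ G' ∈ Δ, G ⊆ G' → G = G') ↔ ∃ i < m, G = F i)
    (hR0 : R 0 = ∅)
    (hshell : ∀ i, 0 < i → i < m →
      ∀ S : Finset σ, ((S ⊆ F i ∧ ∃ j < i, S ⊆ F j) ↔ ∃ v ∈ R i, S ⊆ F i \ {v})) :
    Δ = ⋃ i ∈ range m, Set.Icc (R i) (F i) := by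
  ext G
  simp only [Set.mem_iUnion, Set.mem_Icc, mem_range, exists_prop]
  refine ⟨fun hG => ?_, fun ⟨i, hi, _, hGi⟩ => hΔ hGi ((hfacets _).mpr ⟨i, hi, rfl⟩).1⟩
  -- `G` lies in the interval of the first facet containing it
  have hex : ∃ i, i < m ∧ G ⊆ F i := exists_lt_subset_of_mem hfacets hG
  obtain ⟨him, hGi⟩ := Nat.find_spec hex
  refine ⟨Nat.find hex, him, fun v hv => ?_, hGi⟩
  by_contra hvG
  have hpos : 0 < Nat.find hex := Nat.pos_of_ne_zero fun h0 => by simp [h0, hR0] at hv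
  have hGv : G ⊆ F (Nat.find hex) \ {v} := fun x hx =>
    mem_sdiff.mpr ⟨hGi hx, fun hxv => hvG (mem_singleton.mp hxv ▸ hx)⟩
  obtain ⟨-, j, hj, hGj⟩ := (hshell _ hpos him G).mpr ⟨v, hv, hGv⟩
  exact Nat.find_min hex hj ⟨hj.trans him, hGj⟩

end Shelling

theorem mcMullen_walkup_eval_general (K : Type) [Field K] (n d m : ℕ)
    (Δ : Set (Finset (Fin n)))
    (hdown : ∀ F F' : Finset (Fin n), F' ∈ Δ → F ⊆ F' → F ∈ Δ)
    (F : ℕ → Finset (Fin n)) (R : ℕ → Finset (Fin n))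
    (hfacets : ∀ G : Finset (Fin n),
      (G ∈ Δ ∧ ∀ G' ∈ Δ, G ⊆ G' → G = G') ↔ ∃ i < m, G = F i)
    (hpure : ∀ i < m, (F i).card = d)
    (hR0 : R 0 = ∅)
    (hRsub : ∀ i < m, R i ⊆ F i)
    (hshell : ∀ i, 0 < i → i < m →
      ∀ S : Finset (Fin n), ((S ⊆ F i ∧ ∃ j < i, S ⊆ F j) ↔ ∃ v ∈ R i, S ⊆ F i \ {v})) :
    hilbSeries K n (srIdeal K n Δ) * (1 - PowerSeries.X) ^ d =
      ((∑ i ∈ Finset.range m, Polynomial.X ^ (R i).card : Polynomial ℤ) : PowerSeries ℤ) ∧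
    (∑ i ∈ Finset.range m, Polynomial.X ^ (R i).card : Polynomial ℤ).eval 1 = m := by
  have hΔ : IsLowerSet Δ := fun G G' hle hG => hdown G' G hG hle
  have hseries := hilbSeries_srIdeal_mul_one_sub_pow_of_partition (K := K) hΔ (range m) R F
    (fun i hi => hRsub i (mem_range.mp hi)) (fun i hi => hpure i (mem_range.mp hi))
    (eq_biUnion_Icc_of_shelling hΔ hfacets hR0 hshell) (pairwiseDisjoint_Icc_of_shelling hshell)
  refine ⟨?_, by simp [Polynomial.eval_finsetSum]⟩
  rw [hseries, ← Polynomial.coeToPowerSeries.ringHom_apply, map_sum]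
  simp [Polynomial.coeToPowerSeries.ringHom_apply]

/-- McMullen–Walkup with the evaluation `h(1) = m`: if `Δ` is a pure shellable complex on `[n]`
with shelling `F 0, …, F (m-1)` (facets of cardinality `d`, so `dim Δ + 1 = d`), and for each
`i ≥ 1` the complex `⟨F 0, …, F (i-1)⟩ ∩ ⟨F i⟩` is generated by `{F i \ {v} : v ∈ R i}` with
`R i ⊆ F i` (and `R 0 = ∅`), then the `h`-polynomial of `K[Δ]` — the numerator of the
Hilbert–Poincaré series `HP(t) = h(t)/(1-t)^{dim Δ + 1}` — equals `Σ_{i=1}^m t^{|R i|}`;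
in particular `h(1) = m`, the number of facets of `Δ`. -/
theorem mcMullen_walkup_eval (K : Type) [Field K] (n d m : ℕ)
    (Δ : Set (Finset (Fin n)))
    (hdown : ∀ F F' : Finset (Fin n), F' ∈ Δ → F ⊆ F' → F ∈ Δ)
    (hvert : ∀ i : Fin n, ({i} : Finset (Fin n)) ∈ Δ)
    (F : ℕ → Finset (Fin n)) (R : ℕ → Finset (Fin n))
    (hinj : ∀ i < m, ∀ j < m, F i = F j → i = j)
    (hfacets : ∀ G : Finset (Fin n),
      (G ∈ Δ ∧ ∀ G' ∈ Δ, G ⊆ G' → G = G') ↔ ∃ i < m, G = F i)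
    (hpure : ∀ i < m, (F i).card = d)
    (hR0 : R 0 = ∅)
    (hRsub : ∀ i < m, R i ⊆ F i)
    (hRne : ∀ i, 0 < i → i < m → (R i).Nonempty)
    (hshell : ∀ i, 0 < i → i < m →
      ∀ S : Finset (Fin n), ((S ⊆ F i ∧ ∃ j < i, S ⊆ F j) ↔ ∃ v ∈ R i, S ⊆ F i \ {v})) :
    hilbSeries K n (srIdeal K n Δ) * (1 - PowerSeries.X) ^ d =
      ((∑ i ∈ Finset.range m, Polynomial.X ^ (R i).card : Polynomial ℤ) : PowerSeries ℤ) ∧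
    (∑ i ∈ Finset.range m, Polynomial.X ^ (R i).card : Polynomial ℤ).eval 1 = m :=
  mcMullen_walkup_eval_general K n d m Δ hdown F R hfacets hpure hR0 hRsub hshell
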